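/- arXiv:2009.01639 — 3 statements merged into one kernel-verified Lean document; each statement's English description precedes it below -/
import Mathlib

section
/- Let n, m ∈ ℕ, let X : I → ℝ^{n×n} be an (m−1)-times continuously differentiable function, and let Y : I → ℝ^{n×n} be a differentiable function such that Y' = Y·X holds on I. Then Y is m-times continuously differentiable and, for every j ∈ {0, ..., m}, Y^{(j)} = Y · B_j(X, X', ..., X^{(j-1)}) on I. -/
open Matrix

/-- Noncommutative complete Bell polynomials: `B_0 = I_n`,
`B_{m+1}(X_1,…,X_{m+1}) = ∑_{j=0}^m C(m,j) B_j(X_1,…,X_j) X_{m+1-j}`.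
Here `X : Fin m → _` with `X i` playing the role of `X_{i+1}`. -/
noncomputable def Bell {n : ℕ} :
    (m : ℕ) → (Fin m → Matrix (Fin n) (Fin n) ℝ) → Matrix (Fin n) (Fin n) ℝ
  | 0, _ => 1
  | m + 1, X => ∑ j : Fin (m + 1),
      (Nat.choose m (j : ℕ) : ℝ) •
        (Bell (j : ℕ) (fun i : Fin (j : ℕ) => X (Fin.castLE (by omega) i)) *
          X ⟨m - (j : ℕ), by omega⟩)

/-- Entrywise `k`-th derivative (within `I`) of a matrix-valued function. -/
noncomputable def matD {n : ℕ} (I : Set ℝ) (X : ℝ → Matrix (Fin n) (Fin n) ℝ) (k : ℕ)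
    (x : ℝ) : Matrix (Fin n) (Fin n) ℝ :=
  Matrix.of fun p q => iteratedDerivWithin k (fun t => X t p q) I x

/-- `B_j(X, X', …, X^{(j-1)})` evaluated at `x` (derivatives within `I`). -/
noncomputable def BellD {n : ℕ} (I : Set ℝ) (X : ℝ → Matrix (Fin n) (Fin n) ℝ) (j : ℕ)
    (x : ℝ) : Matrix (Fin n) (Fin n) ℝ :=
  Bell j (fun i : Fin j => matD I X (i : ℕ) x)

/-- Generalized Wronskian `W_f^k = det(f^{(k_1)} | … | f^{(k_n)})` (derivatives within `I`). -/
noncomputable def genW {n : ℕ} (I : Set ℝ) (f : ℝ → Fin n → ℝ) (k : Fin n → ℕ) (x : ℝ) : ℝ :=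
  Matrix.det (Matrix.of fun p q => iteratedDerivWithin (k q) (fun t => f t p) I x)

/-- The multi-index `(n-1, n-2, …, 1, 0)` of the ordinary Wronskian. -/
def wIdx (n : ℕ) : Fin n → ℕ := fun q => n - 1 - (q : ℕ)

/-- The multi-index `(n+d, n-1, …, j+1, j-1, …, 1, 0)`. -/
def dIdx (n d j : ℕ) : Fin n → ℕ :=
  fun q => if (q : ℕ) = 0 then n + d
    else if j < n - (q : ℕ) then n - (q : ℕ) else n - (q : ℕ) - 1

/-- `Φ_f^{[j]} = (-1)^{n-j-1} W_f^{(n,n-1,…,j+1,j-1,…,0)} / W_f`. -/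
noncomputable def Phi {n : ℕ} (I : Set ℝ) (f : ℝ → Fin n → ℝ) (j : ℕ) (x : ℝ) : ℝ :=
  (-1 : ℝ) ^ (n - j - 1) * genW I f (dIdx n 0 j) x / genW I f (wIdx n) x

/-- The `1`-indexed standard basis vector `e_i` of `ℝ^n`. -/
def stdB (n i : ℕ) : Fin n → ℝ := fun p => if (p : ℕ) + 1 = i then 1 else 0

/-- The matrix `X_a = (a | e_1 | … | e_{n-1})`. -/
def colMat {n : ℕ} (a : ℝ → Fin n → ℝ) (x : ℝ) : Matrix (Fin n) (Fin n) ℝ :=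
  Matrix.of fun p q =>
    if (q : ℕ) = 0 then a x p else if (p : ℕ) + 1 = (q : ℕ) then 1 else 0

/-- The matrix `Y_f = (f^{(n-1)} | … | f' | f)` (derivatives within `I`). -/
noncomputable def Yfun {n : ℕ} (I : Set ℝ) (f : ℝ → Fin n → ℝ) (x : ℝ) :
    Matrix (Fin n) (Fin n) ℝ :=
  Matrix.of fun p q => iteratedDerivWithin (n - 1 - (q : ℕ)) (fun t => f t p) I x

/-- The `1`-indexed component `a_i` of `a : I → ℝ^n`, with `a_i := 0` for `i > n`. -/
noncomputable def aExt {n : ℕ} (a : ℝ → Fin n → ℝ) (i : ℕ) : ℝ → ℝ :=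
  fun t => if h : i - 1 < n then a t ⟨i - 1, h⟩ else 0

/-- `y` is an `n`-times differentiable (on `I`) solution of
`y^{(n)} = a_1 y^{(n-1)} + ⋯ + a_n y`, where `a i` is `a_{i+1}`. -/
def SolvesDE {n : ℕ} (I : Set ℝ) (a : ℝ → Fin n → ℝ) (y : ℝ → ℝ) : Prop :=
  (∀ k < n, DifferentiableOn ℝ (iteratedDerivWithin k y I) I) ∧
    ∀ x ∈ I, iteratedDerivWithin n y I x =
      ∑ i : Fin n, a x i * iteratedDerivWithin (n - 1 - (i : ℕ)) y I x

/-- `f : I → ℝ^n` is a fundamental system of solutions of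
`y^{(n)} = a_1 y^{(n-1)} + ⋯ + a_n y`: each component solves the equation and the
components are linearly independent functions on `I`. -/
def FundSystem {n : ℕ} (I : Set ℝ) (a : ℝ → Fin n → ℝ) (f : ℝ → Fin n → ℝ) : Prop :=
  (∀ p : Fin n, SolvesDE I a fun t => f t p) ∧
    LinearIndependent ℝ fun p : Fin n => I.restrict fun t => f t p

lemma matD_zero {n : ℕ} (I : Set ℝ) (X : ℝ → Matrix (Fin n) (Fin n) ℝ) (x : ℝ) :
    matD I X 0 x = X x := by
  ext p q; simp [matD]

lemma bellD_zero {n : ℕ} (I : Set ℝ) (X : ℝ → Matrix (Fin n) (Fin n) ℝ) (x : ℝ) :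
    BellD I X 0 x = 1 := by
  simp [BellD, Bell]

lemma bellD_succ {n : ℕ} (I : Set ℝ) (X : ℝ → Matrix (Fin n) (Fin n) ℝ) (j : ℕ) (x : ℝ) :
    BellD I X (j+1) x = ∑ i ∈ Finset.range (j+1),
      (Nat.choose j i : ℝ) • (BellD I X i x * matD I X (j - i) x) := by
  rw [← Fin.sum_univ_eq_sum_range
    (fun i => (Nat.choose j i : ℝ) • (BellD I X i x * matD I X (j - i) x)) (j+1)]
  simp only [BellD, Bell, Fin.coe_castLE]

lemma bellD_one {n : ℕ} (I : Set ℝ) (X : ℝ → Matrix (Fin n) (Fin n) ℝ) (x : ℝ) :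
    BellD I X 1 x = X x := by
  rw [show (1:ℕ) = 0 + 1 from rfl, bellD_succ]
  simp [bellD_zero, matD_zero]

lemma key_alg {R : Type*} [Ring R] [Module ℝ R] [SMulCommClass ℝ R R] [IsScalarTower ℝ R R]
    (B M : ℕ → R)
    (hrec : ∀ j, B (j+1) = ∑ i ∈ Finset.range (j+1),
        (Nat.choose j i : ℝ) • (B i * M (j - i))) (j : ℕ) :
    ∑ i ∈ Finset.range (j+1), (Nat.choose j i : ℝ) •
        ((B (i+1) - M 0 * B i) * M (j-i) + B i * M (j-i+1))
      = B (j+2) - M 0 * B (j+1) := by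
  have step : ∀ i ∈ Finset.range (j+1),
      (Nat.choose j i : ℝ) • ((B (i+1) - M 0 * B i) * M (j-i) + B i * M (j-i+1))
        = ((Nat.choose j i : ℝ) • (B (i+1) * M (j-i))
            + (Nat.choose j i : ℝ) • (B i * M (j+1-i)))
          - M 0 * ((Nat.choose j i : ℝ) • (B i * M (j-i))) := by
    intro i hi
    have hij : i ≤ j := by simpa [Nat.lt_succ_iff] using hi
    have h1 : j - i + 1 = j + 1 - i := by omega
    rw [h1, sub_mul, smul_add, smul_sub, mul_smul_comm, mul_assoc]
    abel
  rw [Finset.sum_congr rfl step, Finset.sum_sub_distrib, Finset.sum_add_distrib,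
    ← Finset.mul_sum, ← hrec j]
  congr 1
  rw [hrec (j+1), Finset.sum_range_succ' _ (j+1)]
  have hsplit : ∀ i ∈ Finset.range (j+1),
      ((j+1).choose (i+1) : ℝ) • (B (i+1) * M (j+1-(i+1)))
        = (Nat.choose j i : ℝ) • (B (i+1) * M (j-i))
          + (Nat.choose j (i+1) : ℝ) • (B (i+1) * M (j-i)) := by
    intro i hi
    have h1 : j + 1 - (i+1) = j - i := by omega
    rw [h1, Nat.choose_succ_succ]
    push_cast
    rw [add_smul]
  rw [Finset.sum_congr rfl hsplit, Finset.sum_add_distrib]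
  have hS2 : ∑ i ∈ Finset.range (j+1), (Nat.choose j i : ℝ) • (B i * M (j+1-i))
      = ∑ i ∈ Finset.range (j+1), (Nat.choose j (i+1) : ℝ) • (B (i+1) * M (j-i))
        + ((j+1).choose 0 : ℝ) • (B 0 * M (j+1-0)) := by
    rw [Finset.sum_range_succ' (fun i => (Nat.choose j i : ℝ) • (B i * M (j+1-i))) j,
      Finset.sum_range_succ (fun i => (Nat.choose j (i+1) : ℝ) • (B (i+1) * M (j-i))) j]
    simp only [Nat.choose_succ_self, Nat.cast_zero, zero_smul, add_zero, Nat.choose_zero_right,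
      Nat.cast_one, Nat.sub_zero]
    congr 1
    refine Finset.sum_congr rfl fun i hi => ?_
    have : j + 1 - (i+1) = j - i := by omega
    rw [this]
  rw [hS2]
  abel


/-- if `Y' = Y·X` on `I` with `X` being `(m-1)`-times continuously
differentiable, then `Y` is `m`-times continuously differentiable and
`Y^{(j)} = Y · B_j(X,…,X^{(j-1)})` on `I` for `0 ≤ j ≤ m`. -/
theorem stmt_1 (n m : ℕ) (hn : 0 < n) (hm : 0 < m) (I : Set ℝ) (hIo : IsOpen I)
    (hIne : I.Nonempty) (hIc : I.OrdConnected)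
    (X Y : ℝ → Matrix (Fin n) (Fin n) ℝ)
    (hX : ∀ p q : Fin n, ContDiffOn ℝ ((m - 1 : ℕ) : ℕ∞) (fun t => X t p q) I)
    (hY : ∀ p q : Fin n, DifferentiableOn ℝ (fun t => Y t p q) I)
    (hYX : ∀ x ∈ I,
      (Matrix.of fun p q => derivWithin (fun t => Y t p q) I x) = Y x * X x) :
    (∀ p q : Fin n, ContDiffOn ℝ ((m : ℕ) : ℕ∞) (fun t => Y t p q) I) ∧
      ∀ j ≤ m, ∀ x ∈ I, matD I Y j x = Y x * BellD I X j x := by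
  have hU : UniqueDiffOn ℝ I := hIo.uniqueDiffOn
  set m' := m - 1 with hm'def
  -- derivative of matD X
  have hMd : ∀ k, k < m' → ∀ x ∈ I, ∀ p q : Fin n,
      HasDerivWithinAt (fun t => matD I X k t p q) (matD I X (k+1) x p q) I x := by
    intro k hk x hx p q
    have hd : DifferentiableOn ℝ (iteratedDerivWithin k (fun t => X t p q) I) I :=
      (hX p q).differentiableOn_iteratedDerivWithin (by exact_mod_cast hk) hU
    have h := (hd x hx).hasDerivWithinAt
    simpa [matD, iteratedDerivWithin_succ] using h
  -- derivative of BellD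
  have hBd : ∀ j, j ≤ m' → ∀ x ∈ I, ∀ p q : Fin n,
      HasDerivWithinAt (fun t => BellD I X j t p q)
        ((BellD I X (j+1) x - X x * BellD I X j x) p q) I x := by
    intro j
    induction j using Nat.strong_induction_on with
    | _ j ih =>
      match j with
      | 0 =>
        intro _ x hx p q
        have h0 : (BellD I X (0+1) x - X x * BellD I X 0 x) p q = 0 := by
          rw [show (0+1:ℕ) = 1 from rfl, bellD_one, bellD_zero, mul_one, sub_self,
            Matrix.zero_apply]
        rw [h0]
        have hfun : (fun t => BellD I X 0 t p q)
            = fun _ : ℝ => (1 : Matrix (Fin n) (Fin n) ℝ) p q := by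
          funext t; rw [bellD_zero]
        rw [hfun]
        exact hasDerivWithinAt_const x I _
      | j + 1 =>
        intro hj x hx p q
        have hD : ∀ i ∈ Finset.range (j+1), ∀ r : Fin n,
            HasDerivWithinAt (fun t => BellD I X i t p r)
              ((BellD I X (i+1) x - X x * BellD I X i x) p r) I x := by
          intro i hi r
          have hi' := Finset.mem_range.mp hi
          exact ih i (by omega) (by omega) x hx p r
        have h1 : HasDerivWithinAt
            (fun t => ∑ i ∈ Finset.range (j+1), (Nat.choose j i : ℝ) *
              ∑ r : Fin n, BellD I X i t p r * matD I X (j-i) t r q)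
            (∑ i ∈ Finset.range (j+1), (Nat.choose j i : ℝ) *
              ∑ r : Fin n, ((BellD I X (i+1) x - X x * BellD I X i x) p r * matD I X (j-i) x r q
                + BellD I X i x p r * matD I X (j-i+1) x r q)) I x := by
          apply HasDerivWithinAt.fun_sum
          intro i hi
          apply HasDerivWithinAt.const_mul
          apply HasDerivWithinAt.fun_sum
          intro r _
          have hi' := Finset.mem_range.mp hi
          exact (hD i hi r).mul (hMd (j-i) (by omega) x hx r q)
        have h2 : (fun t => BellD I X (j+1) t p q)
            = fun t => ∑ i ∈ Finset.range (j+1), (Nat.choose j i : ℝ) *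
              ∑ r : Fin n, BellD I X i t p r * matD I X (j-i) t r q := by
          funext t
          rw [bellD_succ]
          simp [Matrix.sum_apply, Matrix.smul_apply, Matrix.mul_apply, smul_eq_mul]
        rw [h2]
        have hkey := key_alg (fun i => BellD I X i x) (fun k => matD I X k x)
          (fun j => bellD_succ I X j x) j
        have hX0 : X x = matD I X 0 x := (matD_zero I X x).symm
        have hval : (BellD I X (j+1+1) x - X x * BellD I X (j+1) x) p q
            = ∑ i ∈ Finset.range (j+1), (Nat.choose j i : ℝ) *
              ∑ r : Fin n, ((BellD I X (i+1) x - X x * BellD I X i x) p r * matD I X (j-i) x r q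
                + BellD I X i x p r * matD I X (j-i+1) x r q) := by
          rw [show j + 1 + 1 = j + 2 from rfl, hX0, ← hkey]
          rw [← hX0]
          simp only [Matrix.sum_apply, Matrix.smul_apply, Matrix.add_apply, Matrix.sub_apply,
            Matrix.mul_apply, smul_eq_mul, Finset.sum_add_distrib, Finset.mul_sum, mul_add]
        rw [hval]
        exact h1
  -- derivative of Y entries
  have hYd : ∀ x ∈ I, ∀ p q : Fin n,
      HasDerivWithinAt (fun t => Y t p q) ((Y x * X x) p q) I x := by
    intro x hx p q
    have h := ((hY p q) x hx).hasDerivWithinAt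
    have he : derivWithin (fun t => Y t p q) I x = (Y x * X x) p q := by
      rw [← hYX x hx]; rfl
    rwa [he] at h
  -- main formula
  have hmain : ∀ j, j ≤ m → ∀ x ∈ I, ∀ p q : Fin n,
      iteratedDerivWithin j (fun t => Y t p q) I x = (Y x * BellD I X j x) p q := by
    intro j
    induction j with
    | zero =>
      intro _ x hx p q
      rw [iteratedDerivWithin_zero, bellD_zero, mul_one]
    | succ j ihj =>
      intro hj x hx p q
      have hj' : j ≤ m := by omega
      have hjm' : j ≤ m' := by omega
      have hprod : HasDerivWithinAt (fun t => ∑ r : Fin n, Y t p r * BellD I X j t r q)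
          (∑ r : Fin n, ((Y x * X x) p r * BellD I X j x r q
            + Y x p r * (BellD I X (j+1) x - X x * BellD I X j x) r q)) I x :=
        HasDerivWithinAt.fun_sum fun r _ => (hYd x hx p r).mul (hBd j hjm' x hx r q)
      have hcongr : HasDerivWithinAt (iteratedDerivWithin j (fun t => Y t p q) I)
          (∑ r : Fin n, ((Y x * X x) p r * BellD I X j x r q
            + Y x p r * (BellD I X (j+1) x - X x * BellD I X j x) r q)) I x :=
        hprod.congr (fun y hy => by rw [ihj hj' y hy, Matrix.mul_apply])
          (by rw [ihj hj' x hx, Matrix.mul_apply])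
      rw [iteratedDerivWithin_succ, hcongr.derivWithin (hU x hx)]
      have halg : Y x * X x * BellD I X j x
          + Y x * (BellD I X (j+1) x - X x * BellD I X j x) = Y x * BellD I X (j+1) x := by
        rw [mul_sub, ← mul_assoc]; abel
      calc ∑ r : Fin n, ((Y x * X x) p r * BellD I X j x r q
            + Y x p r * (BellD I X (j+1) x - X x * BellD I X j x) r q)
          = (Y x * X x * BellD I X j x
              + Y x * (BellD I X (j+1) x - X x * BellD I X j x)) p q := by
            simp [Matrix.mul_apply, Matrix.add_apply, Finset.sum_add_distrib]
        _ = (Y x * BellD I X (j+1) x) p q := by rw [halg]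
  -- smoothness
  have hC : ∀ k, k ≤ m → ∀ p q : Fin n, ContDiffOn ℝ ((k : ℕ) : ℕ∞) (fun t => Y t p q) I := by
    intro k
    induction k with
    | zero =>
      intro _ p q
      have h0 : (((0:ℕ):ℕ∞) : WithTop ℕ∞) = 0 := by norm_cast
      rw [h0]
      exact contDiffOn_zero.mpr (hY p q).continuousOn
    | succ k ihk =>
      intro hk p q
      have hcast : (((k+1 : ℕ) : ℕ∞) : WithTop ℕ∞) = ((k : ℕ∞) : WithTop ℕ∞) + 1 := by
        push_cast; ring
      rw [hcast, contDiffOn_succ_iff_derivWithin hU]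
      refine ⟨hY p q, by simp, ?_⟩
      have hXle : ∀ r q' : Fin n, ContDiffOn ℝ ((k : ℕ) : ℕ∞) (fun t => X t r q') I := by
        intro r q'
        exact (hX r q').of_le (by exact_mod_cast (by omega : k ≤ m - 1))
      refine (ContDiffOn.sum (s := Finset.univ)
        (f := fun r t => Y t p r * X t r q) ?_).congr ?_
      · intro r _
        exact (ihk (by omega) p r).mul (hXle r q)
      · intro t ht
        have h2 : derivWithin (fun s => Y s p q) I t = (Y t * X t) p q := by
          rw [← hYX t ht]; rfl
        rw [h2, Matrix.mul_apply]
  refine ⟨fun p q => hC m le_rfl p q, fun j hj x hx => ?_⟩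
  ext p q
  simp only [matD, Matrix.of_apply]
  exact hmain j hj x hx p q
end

section
/- Let n, m ∈ ℕ, let a = (a_1, ..., a_n) : I → ℝ^n be an (m−1)-times continuously differentiable function, and let f : I → ℝ^n be a fundamental system of solutions of y^{(n)} = a_1 y^{(n-1)} + ... + a_n y. Define X_a := (a | e_1 | ... | e_{n-1}). Then for every k = (k_1, ..., k_n) ∈ ℕ₀^n with max(k_1, ..., k_n) ≤ m+n−1, setting ℓ_i := max(k_i − n + 1, 0) for i ∈ {1, ..., n}, one has on I: W_f^k = W_f · det( B_{ℓ_1}(X_a, ..., X_a^{(ℓ_1−1)}) e_{n+ℓ_1−k_1} | ... | B_{ℓ_n}(X_a, ..., X_a^{(ℓ_n−1)}) e_{n+ℓ_n−k_n} ). -/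
open Matrix

/-!
The matrix `Y_f = (f^{(n-1)} | … | f' | f)` solves the companion system `Y_f' = Y_f X_a`.
Differentiating `Y' = Y X` with the Leibniz rule gives
`Y^{(ℓ+1)} = (Y X)^{(ℓ)} = ∑_j C(ℓ,j) Y^{(j)} X^{(ℓ-j)}`, so by induction
`Y^{(ℓ)} = Y B_ℓ(X, …, X^{(ℓ-1)})`, which is the defining recursion of `B_ℓ`.
The column `f^{(k)}` is column `n + ℓ - k` of `Y_f^{(ℓ)}` for `ℓ = max(k - n + 1, 0)`, hence
`(f^{(k_1)} | … | f^{(k_n)})` is `Y_f` times the matrix of the vectors `B_{ℓ_i} e_{n+ℓ_i-k_i}`,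
and `det Y_f = W_f`.
-/

theorem iteratedDerivWithin_iteratedDerivWithin {𝕜 F : Type*} [NontriviallyNormedField 𝕜]
    [NormedAddCommGroup F] [NormedSpace 𝕜 F] (f : 𝕜 → F) (s : Set 𝕜) (j k : ℕ) :
    iteratedDerivWithin k (iteratedDerivWithin j f s) s = iteratedDerivWithin (k + j) f s := by
  have h (g : 𝕜 → F) (i : ℕ) : iteratedDerivWithin i g s = (derivWithin · s)^[i] g :=
    funext fun _ => iteratedDerivWithin_eq_iterate
  rw [h, h, h, Function.iterate_add_apply]

theorem mulVec_stdB_succ {n : ℕ} (A : Matrix (Fin n) (Fin n) ℝ) (s : Fin n) :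
    A *ᵥ stdB n (s + 1) = fun p => A p s := by
  have : stdB n (s + 1) = Pi.single s 1 := by
    ext p
    simp [stdB, Pi.single_apply, Fin.ext_iff]
  rw [this, mulVec_single_one]
  rfl

theorem BellD_succ {n : ℕ} (I : Set ℝ) (X : ℝ → Matrix (Fin n) (Fin n) ℝ) (ℓ : ℕ) (x : ℝ) :
    BellD I X (ℓ + 1) x = ∑ j : Fin (ℓ + 1),
      (ℓ.choose j : ℝ) • (BellD I X j x * matD I X (ℓ - j) x) := by
  simp only [BellD]
  rw [Bell]
  rfl

theorem matD_eq_mul_BellD {n : ℕ} {I : Set ℝ} (hI : UniqueDiffOn ℝ I) {Y X : ℝ → Matrix (Fin n) (Fin n) ℝ} {r : ℕ}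
    (hY : ∀ p q, ContDiffOn ℝ (r + 1 : ℕ) (fun t => Y t p q) I)
    (hX : ∀ p q, ContDiffOn ℝ r (fun t => X t p q) I)
    (hYX : ∀ x ∈ I, ∀ p q, derivWithin (fun t => Y t p q) I x = (Y x * X x) p q)
    {ℓ : ℕ} (hℓ : ℓ ≤ r + 1) {x : ℝ} (hx : x ∈ I) :
    matD I Y ℓ x = Y x * BellD I X ℓ x := by
  induction ℓ using Nat.strong_induction_on generalizing x with
  | _ ℓ ih =>
  rcases ℓ with _ | ℓ
  · ext p q
    simp [matD, BellD, Bell]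
  ext p q
  have hderiv : Set.EqOn (derivWithin (fun t => Y t p q) I)
      (fun t => ∑ s, Y t p s * X t s q) I := fun y hy => hYX y hy p q
  have hleib : ∀ s, iteratedDerivWithin ℓ (fun t => Y t p s * X t s q) I x =
      ∑ j ∈ Finset.range (ℓ + 1),
        (ℓ.choose j : ℝ) * (Y x * BellD I X j x) p s * matD I X (ℓ - j) x s q := by
    intro s
    rw [← Pi.mul_def, iteratedDerivWithin_mul hx hI
      ((hY p s).of_le (by exact_mod_cast (by omega : ℓ ≤ r + 1)) x hx)
      ((hX s q).of_le (by exact_mod_cast (by omega : ℓ ≤ r)) x hx)]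
    refine Finset.sum_congr rfl fun j hj => ?_
    rw [← ih j (by simp at hj; omega) (by simp at hj; omega) hx]
    rfl
  calc matD I Y (ℓ + 1) x p q
      = iteratedDerivWithin ℓ (fun t => ∑ s, Y t p s * X t s q) I x := by
        rw [matD, of_apply, iteratedDerivWithin_succ', iteratedDerivWithin_congr hderiv hx]
    _ = ∑ s, ∑ j ∈ Finset.range (ℓ + 1),
          (ℓ.choose j : ℝ) * (Y x * BellD I X j x) p s * matD I X (ℓ - j) x s q := by
        rw [iteratedDerivWithin_fun_sum hx hI fun s _ =>
          (((hY p s).of_le (by exact_mod_cast (by omega : ℓ ≤ r + 1))).mul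
            ((hX s q).of_le (by exact_mod_cast (by omega : ℓ ≤ r))) x hx)]
        exact Finset.sum_congr rfl fun s _ => hleib s
    _ = (Y x * BellD I X (ℓ + 1) x) p q := by
        rw [Finset.sum_comm, BellD_succ, Matrix.mul_sum, Matrix.sum_apply,
          ← Fin.sum_univ_eq_sum_range]
        refine Finset.sum_congr rfl fun j _ => ?_
        rw [Matrix.mul_smul, Matrix.smul_apply, ← Matrix.mul_assoc, Matrix.mul_apply, smul_eq_mul,
          Finset.mul_sum]
        exact Finset.sum_congr rfl fun s _ => by ring

section LinearODE

variable {n : ℕ} {I : Set ℝ} {a : ℝ → Fin n → ℝ}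

/-- Bootstrap on `s ≤ r + 1`: the derivatives of `y, …, y^{(n-1)}` are
`y', …, y^{(n-1)}, ∑ a_i y^{(n-i)}`, so if the former are `C^s`, they are `C^{s+1}`. -/
theorem SolvesDE.contDiffOn_iteratedDerivWithin (hI : UniqueDiffOn ℝ I) {r : ℕ}
    (ha : ∀ i, ContDiffOn ℝ r (fun t => a t i) I) {y : ℝ → ℝ} (hy : SolvesDE I a y)
    {j : ℕ} (hj : j < n) : ContDiffOn ℝ (r + 1 : ℕ) (iteratedDerivWithin j y I) I := by
  obtain ⟨hdiff, hode⟩ := hy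
  suffices h : ∀ s ≤ r + 1, ∀ j < n, ContDiffOn ℝ s (iteratedDerivWithin j y I) I from
    h _ le_rfl j hj
  intro s
  induction s with
  | zero => exact fun _ j hj => contDiffOn_zero.2 (hdiff j hj).continuousOn
  | succ s ih =>
    intro hs j hj
    have hnext : ContDiffOn ℝ s (iteratedDerivWithin (j + 1) y I) I := by
      rcases Nat.lt_or_ge (j + 1) n with hj' | hj'
      · exact ih (by omega) _ hj'
      · have hrhs : ContDiffOn ℝ s
            (fun t => ∑ i : Fin n, a t i * iteratedDerivWithin (n - 1 - i) y I t) I :=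
          ContDiffOn.sum fun i _ =>
            ((ha i).of_le (by exact_mod_cast (by omega : s ≤ r))).mul (ih (by omega) _ (by omega))
        rw [show j + 1 = n by omega]
        exact hrhs.congr hode
    push_cast
    rw [contDiffOn_succ_iff_derivWithin hI, ← iteratedDerivWithin_succ]
    exact ⟨hdiff j hj, by simp, hnext⟩

theorem contDiffOn_Yfun_apply (hI : UniqueDiffOn ℝ I) {r : ℕ}
    (ha : ∀ i, ContDiffOn ℝ r (fun t => a t i) I) {f : ℝ → Fin n → ℝ}
    (hf : ∀ p, SolvesDE I a fun t => f t p) (p q : Fin n) :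
    ContDiffOn ℝ (r + 1 : ℕ) (fun t => Yfun I f t p q) I :=
  (hf p).contDiffOn_iteratedDerivWithin hI ha (by omega)

theorem contDiffOn_colMat_apply {r : ℕ} (ha : ∀ i, ContDiffOn ℝ r (fun t => a t i) I)
    (p q : Fin n) : ContDiffOn ℝ r (fun t => colMat a t p q) I := by
  by_cases hq : (q : ℕ) = 0
  · simpa [colMat, hq] using ha p
  · simp only [colMat, of_apply, hq, if_false]
    exact contDiffOn_const

theorem derivWithin_Yfun_apply {f : ℝ → Fin n → ℝ} (hf : ∀ p, SolvesDE I a fun t => f t p)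
    {x : ℝ} (hx : x ∈ I) (p q : Fin n) :
    derivWithin (fun t => Yfun I f t p q) I x = (Yfun I f x * colMat a x) p q := by
  change derivWithin (iteratedDerivWithin (n - 1 - q) (fun t => f t p) I) I x = _
  rw [← iteratedDerivWithin_succ, Matrix.mul_apply]
  by_cases hq : (q : ℕ) = 0
  · rw [show n - 1 - q + 1 = n by omega, (hf p).2 x hx]
    refine Finset.sum_congr rfl fun s _ => ?_
    simp only [Yfun, colMat, of_apply, hq, if_true]
    ring
  · let q' : Fin n := ⟨q - 1, by omega⟩
    rw [Fintype.sum_eq_single q']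
    · simp only [Yfun, colMat, of_apply, hq, if_false, q']
      rw [if_pos (by omega), mul_one, show n - 1 - q + 1 = n - 1 - (q - 1) by omega]
    · intro s hs
      have : (s : ℕ) + 1 ≠ q := fun h => hs (Fin.ext (by simp [q']; omega))
      simp [colMat, hq, this]

theorem matD_Yfun_apply (f : ℝ → Fin n → ℝ) (ℓ : ℕ) (x : ℝ) (p s : Fin n) :
    matD I (Yfun I f) ℓ x p s = iteratedDerivWithin (ℓ + (n - 1 - s)) (fun t => f t p) I x := by
  rw [← iteratedDerivWithin_iteratedDerivWithin]
  rfl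

/-- `k + 1 - n` is truncated: for `k < n` it is `0`, and the column is `Y_f e_{n-k}`. -/
theorem iteratedDerivWithin_eq_Yfun_mulVec_BellD (hn : 0 < n) (hI : UniqueDiffOn ℝ I) {r : ℕ}
    (ha : ∀ i, ContDiffOn ℝ r (fun t => a t i) I) {f : ℝ → Fin n → ℝ}
    (hf : ∀ p, SolvesDE I a fun t => f t p) {k : ℕ} (hk : k ≤ r + n) {x : ℝ} (hx : x ∈ I) :
    (fun p => iteratedDerivWithin k (fun t => f t p) I x) =
      Yfun I f x *ᵥ (BellD I (colMat a) (k + 1 - n) x *ᵥ stdB n (n + (k + 1 - n) - k)) := by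
  let s : Fin n := ⟨n + (k + 1 - n) - k - 1, by omega⟩
  rw [show n + (k + 1 - n) - k = s + 1 by simp only [s]; omega, mulVec_mulVec, mulVec_stdB_succ,
    ← matD_eq_mul_BellD hI (contDiffOn_Yfun_apply hI ha hf) (contDiffOn_colMat_apply ha)
      (fun x hx => derivWithin_Yfun_apply hf hx) (by omega) hx]
  ext p
  rw [matD_Yfun_apply, show k + 1 - n + (n - 1 - s) = k by simp only [s]; omega]

end LinearODE

theorem stmt_5_general (n m : ℕ) (I : Set ℝ) (hIo : IsOpen I)
    (a f : ℝ → Fin n → ℝ)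
    (ha : ∀ i : Fin n, ContDiffOn ℝ ((m - 1 : ℕ) : ℕ∞) (fun t => a t i) I)
    (hf : FundSystem I a f) :
    ∀ k : Fin n → ℕ, (∀ q, k q ≤ m + n - 1) → ∀ x ∈ I,
      genW I f k x = genW I f (wIdx n) x *
        Matrix.det (Matrix.of fun p q =>
          (BellD I (colMat a) (k q + 1 - n) x).mulVec
            (stdB n (n + (k q + 1 - n) - k q)) p) := by
  intro k hk x hx
  have ha' : ∀ i, ContDiffOn ℝ (m - 1 : ℕ) (fun t => a t i) I := fun i => by exact_mod_cast ha i
  have hcol : ∀ q, (fun p => iteratedDerivWithin (k q) (fun t => f t p) I x) =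
      Yfun I f x *ᵥ (BellD I (colMat a) (k q + 1 - n) x *ᵥ stdB n (n + (k q + 1 - n) - k q)) :=
    fun q => iteratedDerivWithin_eq_Yfun_mulVec_BellD q.pos hIo.uniqueDiffOn ha' hf.1
      (by have := hk q; omega) hx
  have hfac : (Matrix.of fun p q => iteratedDerivWithin (k q) (fun t => f t p) I x) =
      Yfun I f x * Matrix.of fun p q =>
        (BellD I (colMat a) (k q + 1 - n) x *ᵥ stdB n (n + (k q + 1 - n) - k q)) p :=
    Matrix.ext fun p q => congrFun (hcol q) p
  rw [genW, hfac, det_mul]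
  rfl

/-- the generalized Wronskian formula
`W_f^k = W_f · det(B_{ℓ_1}(X_a,…) e_{n+ℓ_1-k_1} | … | B_{ℓ_n}(X_a,…) e_{n+ℓ_n-k_n})`
on `I`, where `ℓ_i = max(k_i-n+1, 0)` and `max k_i ≤ m+n-1`. -/
theorem stmt_5 (n m : ℕ) (hn : 0 < n) (hm : 0 < m) (I : Set ℝ) (hIo : IsOpen I)
    (hIne : I.Nonempty) (hIc : I.OrdConnected) (a f : ℝ → Fin n → ℝ)
    (ha : ∀ i : Fin n, ContDiffOn ℝ ((m - 1 : ℕ) : ℕ∞) (fun t => a t i) I)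
    (hf : FundSystem I a f) :
    ∀ k : Fin n → ℕ, (∀ q, k q ≤ m + n - 1) → ∀ x ∈ I,
      genW I f k x = genW I f (wIdx n) x *
        Matrix.det (Matrix.of fun p q =>
          (BellD I (colMat a) (k q + 1 - n) x).mulVec
            (stdB n (n + (k q + 1 - n) - k q)) p) :=
  stmt_5_general n m I hIo a f ha hf
end

section
/- Let n ∈ ℕ, let a = (a_1, ..., a_n) : I → ℝ^n be continuously differentiable, and let f : I → ℝ^n be a fundamental system of solutions of y^{(n)} = a_1 y^{(n-1)} + ... + a_n y. Then for every j ∈ {0, ..., n−1}, one has on I: W_f^{(n+1, n−1, ..., j+1, j−1, ..., 1, 0)} = (−1)^{n−j−1} · W_f · (a_1 a_{n−j} + a_{n−j+1} + a_{n−j}'), where a_{n+1} := 0 and the multi-index consists of n+1 followed by the integers n−1 down to 0 with j omitted. -/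
open Matrix

/-!
Differentiating `y⁽ⁿ⁾ = ∑ aᵢ y⁽ⁿ⁻ⁱ⁾` once gives `y⁽ⁿ⁺¹⁾ = ∑ (aᵢ' y⁽ⁿ⁻ⁱ⁾ + aᵢ y⁽ⁿ⁺¹⁻ⁱ⁾)`.
Substituting this into the first column of `W_f^{(n+1, n-1, …, ĵ, …, 0)}` and expanding by
linearity, every determinant whose first column is `f⁽ᵐ⁾` with `m < n`, `m ≠ j`, has a repeated
column and vanishes. What survives is the column `f⁽ʲ⁾`, which is `(-1)^(n-j-1) W_f` after a
cyclic permutation of columns, and the column `f⁽ⁿ⁾`, which the equation itself reduces to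
`a_{n-j} f⁽ʲ⁾` in the same way.
-/

open Finset

namespace Matrix

variable {ι R : Type*} [Fintype ι] [DecidableEq ι] [CommRing R]

noncomputable def detUpdateColLinearMap (M : Matrix ι ι R) (q : ι) : (ι → R) →ₗ[R] R where
  toFun v := (M.updateCol q v).det
  map_add' u v := det_updateCol_add M q u v
  map_smul' s u := det_updateCol_smul M q s u

end Matrix

section Sums

variable {n j : ℕ} {D : ℕ → ℝ}

theorem sum_range_mul_eq_single (hj : j < n) (hD : ∀ m < n, m ≠ j → D m = 0) (g : ℕ → ℝ) :
    ∑ m ∈ range n, g m * D m = g j * D j :=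
  sum_eq_single_of_mem j (mem_range.mpr hj) fun m hm hmj => by
    rw [hD m (mem_range.mp hm) hmj, mul_zero]

theorem sum_range_mul_rev_eq_single (hj : j < n) (hD : ∀ m < n, m ≠ j → D m = 0)
    (A : ℕ → ℝ) : ∑ m ∈ range n, A (m + 1) * D (n - 1 - m) = A (n - j) * D j := by
  rw [← sum_range_reflect]
  calc ∑ m ∈ range n, A (n - 1 - m + 1) * D (n - 1 - (n - 1 - m))
      = ∑ m ∈ range n, A (n - m) * D m := sum_congr rfl fun m hm => by
        rw [mem_range] at hm
        rw [show n - 1 - m + 1 = n - m by omega, show n - 1 - (n - 1 - m) = m by omega]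
    _ = A (n - j) * D j := sum_range_mul_eq_single hj hD fun m => A (n - m)

theorem sum_range_mul_rev_succ_eq (hj : j < n) (hD : ∀ m < n, m ≠ j → D m = 0)
    {A : ℕ → ℝ} (hA : A (n + 1) = 0) :
    ∑ m ∈ range n, A (m + 1) * D (n - m) = A 1 * D n + A (n - j + 1) * D j := by
  calc ∑ m ∈ range n, A (m + 1) * D (n - m)
      = ∑ m ∈ range (n + 1), A (m + 1) * D (n + 1 - 1 - m) := by
        rw [sum_range_succ, hA, zero_mul, add_zero]
        rfl
    _ = ∑ m ∈ range (n + 1), A (n - m + 1) * D m := by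
        rw [← sum_range_reflect]
        refine sum_congr rfl fun m hm => ?_
        rw [mem_range] at hm
        rw [show n + 1 - 1 - m + 1 = n - m + 1 by omega,
          show n + 1 - 1 - (n + 1 - 1 - m) = m by omega]
    _ = A 1 * D n + A (n - j + 1) * D j := by
        rw [sum_range_succ, sum_range_mul_eq_single hj hD, Nat.sub_self, add_comm]

end Sums

section Coefficients

variable {n : ℕ} (a : ℝ → Fin n → ℝ)

theorem aExt_succ (i : Fin n) : aExt a (i + 1) = fun t => a t i := by
  funext t
  simp [aExt]

theorem aExt_eq_zero {i : ℕ} (h : n < i) : aExt a i = 0 := by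
  funext t
  simp [aExt, show ¬i - 1 < n by omega]

end Coefficients

namespace SolvesDE

variable {n : ℕ} {I : Set ℝ} {a : ℝ → Fin n → ℝ} {y : ℝ → ℝ} {x : ℝ}

theorem iteratedDerivWithin_eq_sum (hy : SolvesDE I a y) (hx : x ∈ I) :
    iteratedDerivWithin n y I x =
      ∑ m ∈ range n, aExt a (m + 1) x * iteratedDerivWithin (n - 1 - m) y I x := by
  rw [hy.2 x hx, ← Fin.sum_univ_eq_sum_range]
  simp only [aExt_succ]

theorem iteratedDerivWithin_succ_eq_sum (hI : UniqueDiffOn ℝ I)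
    (ha : ∀ i : Fin n, DifferentiableOn ℝ (fun t => a t i) I) (hy : SolvesDE I a y)
    (hx : x ∈ I) :
    iteratedDerivWithin (n + 1) y I x =
      ∑ m ∈ range n, (derivWithin (aExt a (m + 1)) I x * iteratedDerivWithin (n - 1 - m) y I x +
        aExt a (m + 1) x * iteratedDerivWithin (n - m) y I x) := by
  rw [iteratedDerivWithin_succ, derivWithin_congr (fun t ht => hy.iteratedDerivWithin_eq_sum ht)
    (hy.iteratedDerivWithin_eq_sum hx)]
  refine HasDerivWithinAt.derivWithin (HasDerivWithinAt.fun_sum fun m hm => ?_) (hI x hx)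
  have hm : m < n := mem_range.mp hm
  have hA : HasDerivWithinAt (aExt a (m + 1)) (derivWithin (aExt a (m + 1)) I x) I x := by
    rw [show m + 1 = (⟨m, hm⟩ : Fin n) + 1 from rfl, aExt_succ]
    exact (ha _ x hx).hasDerivWithinAt
  have hy' : HasDerivWithinAt (iteratedDerivWithin (n - 1 - m) y I)
      (iteratedDerivWithin (n - m) y I x) I x := by
    rw [show n - m = n - 1 - m + 1 by omega, iteratedDerivWithin_succ]
    exact (hy.1 _ (by omega) x hx).hasDerivWithinAt
  exact hA.mul hy'

end SolvesDE

section Indices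

variable {n d j m : ℕ}

theorem exists_dIdx_eq (hj : j < n) (hm : m < n) (hmj : m ≠ j) :
    ∃ q : Fin n, (q : ℕ) ≠ 0 ∧ dIdx n d j q = m := by
  rcases lt_or_gt_of_ne hmj with h | h
  · refine ⟨⟨n - m - 1, by omega⟩, ?_, ?_⟩
    · show n - m - 1 ≠ 0
      omega
    · simp only [dIdx]
      split_ifs <;> omega
  · refine ⟨⟨n - m, by omega⟩, ?_, ?_⟩
    · show n - m ≠ 0
      omega
    · simp only [dIdx]
      split_ifs <;> omega

theorem update_dIdx_comp_cycleRange (hj : j < n) :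
    Function.update (dIdx n d j) ⟨0, by omega⟩ j ∘ Fin.cycleRange ⟨n - j - 1, by omega⟩ =
      wIdx n := by
  set i₀ : Fin n := ⟨n - j - 1, by omega⟩
  have hcycle : ∀ q : Fin n, (Fin.cycleRange i₀ q : ℕ) =
      if (q : ℕ) < n - j - 1 then (q : ℕ) + 1 else if (q : ℕ) = n - j - 1 then 0 else (q : ℕ) := by
    intro q
    rcases lt_trichotomy q i₀ with h | rfl | h
    · have h' : (q : ℕ) < n - j - 1 := h
      rw [Fin.coe_cycleRange_of_lt h, if_pos h']
    · rw [Fin.coe_cycleRange_of_le le_rfl]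
      simp [i₀]
    · have h' : n - j - 1 < (q : ℕ) := h
      rw [Fin.cycleRange_of_gt h, if_neg (by omega), if_neg (by omega)]
  funext q
  simp only [Function.comp_apply, Function.update_apply, Fin.ext_iff, hcycle, dIdx, wIdx]
  split_ifs <;> first | contradiction | omega

end Indices

section Wronskian

variable {n : ℕ} (I : Set ℝ) (f : ℝ → Fin n → ℝ)

noncomputable def derivCol (m : ℕ) (x : ℝ) : Fin n → ℝ :=
  fun p => iteratedDerivWithin m (fun t => f t p) I x

noncomputable def genWMatrix (κ : Fin n → ℕ) (x : ℝ) : Matrix (Fin n) (Fin n) ℝ :=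
  Matrix.of fun p q => derivCol I f (κ q) x p

variable {I f} {κ : Fin n → ℕ} {x : ℝ}

theorem genW_update (q : Fin n) (m : ℕ) :
    genW I f (Function.update κ q m) x =
      Matrix.detUpdateColLinearMap (genWMatrix I f κ x) q (derivCol I f m x) := by
  show Matrix.det _ = Matrix.det _
  congr 1
  ext p r
  by_cases hr : r = q
  · subst hr
    simp [genWMatrix, derivCol]
  · simp [genWMatrix, derivCol, hr]

theorem genW_update_eq_zero {q q' : Fin n} (h : q' ≠ q) :
    genW I f (Function.update κ q (κ q')) x = 0 :=
  Matrix.det_zero_of_column_eq h.symm fun p => by simp [h]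

theorem genW_comp_perm (σ : Equiv.Perm (Fin n)) :
    genW I f (κ ∘ σ) x = Equiv.Perm.sign σ * genW I f κ x :=
  Matrix.det_permute' σ (genWMatrix I f κ x)

variable {a : ℝ → Fin n → ℝ}

theorem derivCol_eq_sum (hf : ∀ p, SolvesDE I a fun t => f t p) (hx : x ∈ I) :
    derivCol I f n x = ∑ m ∈ range n, aExt a (m + 1) x • derivCol I f (n - 1 - m) x := by
  ext p
  simp [derivCol, Finset.sum_apply, (hf p).iteratedDerivWithin_eq_sum hx]

theorem derivCol_succ_eq_sum (hI : UniqueDiffOn ℝ I)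
    (ha : ∀ i : Fin n, DifferentiableOn ℝ (fun t => a t i) I)
    (hf : ∀ p, SolvesDE I a fun t => f t p) (hx : x ∈ I) :
    derivCol I f (n + 1) x = ∑ m ∈ range n,
      (derivWithin (aExt a (m + 1)) I x • derivCol I f (n - 1 - m) x +
        aExt a (m + 1) x • derivCol I f (n - m) x) := by
  ext p
  simp [derivCol, Finset.sum_apply, (hf p).iteratedDerivWithin_succ_eq_sum hI ha hx]

variable {d j : ℕ}

theorem genW_update_dIdx_eq_zero (hj : j < n) {m : ℕ} (hm : m < n) (hmj : m ≠ j) :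
    genW I f (Function.update (dIdx n d j) ⟨0, by omega⟩ m) x = 0 := by
  obtain ⟨q, hq, rfl⟩ := exists_dIdx_eq (d := d) hj hm hmj
  exact genW_update_eq_zero fun h => hq (by rw [h])

theorem genW_update_dIdx_self (hj : j < n) :
    genW I f (Function.update (dIdx n d j) ⟨0, by omega⟩ j) x =
      (-1 : ℝ) ^ (n - j - 1) * genW I f (wIdx n) x := by
  rw [← update_dIdx_comp_cycleRange (d := d) hj, genW_comp_perm, Fin.sign_cycleRange,
    ← mul_assoc]
  push_cast
  rw [← pow_add, Even.neg_one_pow ⟨_, rfl⟩, one_mul]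

end Wronskian

theorem stmt_8_general (n : ℕ) (I : Set ℝ) (hIo : IsOpen I) (a f : ℝ → Fin n → ℝ)
    (ha : ∀ i : Fin n, ContDiffOn ℝ 1 (fun t => a t i) I)
    (hf : FundSystem I a f) :
    ∀ j < n, ∀ x ∈ I,
      genW I f (dIdx n 1 j) x =
        (-1 : ℝ) ^ (n - j - 1) * genW I f (wIdx n) x *
          (aExt a 1 x * aExt a (n - j) x + aExt a (n - j + 1) x +
            derivWithin (aExt a (n - j)) I x) := by
  intro j hj x hx
  set q₀ : Fin n := ⟨0, by omega⟩
  set D : ℕ → ℝ := fun m => genW I f (Function.update (dIdx n 1 j) q₀ m) x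
  have hD : ∀ m, Matrix.detUpdateColLinearMap (genWMatrix I f (dIdx n 1 j) x) q₀
      (derivCol I f m x) = D m := fun m => (genW_update q₀ m).symm
  have hD_zero : ∀ m < n, m ≠ j → D m = 0 := fun m hm hmj => genW_update_dIdx_eq_zero hj hm hmj
  have hD_order : D n = aExt a (n - j) x * D j := by
    rw [← hD, derivCol_eq_sum hf.1 hx, map_sum]
    simp only [map_smul, hD, smul_eq_mul]
    exact sum_range_mul_rev_eq_single hj hD_zero fun m => aExt a m x
  have hD_order_succ : D (n + 1) = derivWithin (aExt a (n - j)) I x * D j +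
      (aExt a 1 x * D n + aExt a (n - j + 1) x * D j) := by
    rw [← hD, derivCol_succ_eq_sum hIo.uniqueDiffOn (fun i => (ha i).differentiableOn one_ne_zero)
      hf.1 hx, map_sum]
    simp only [map_add, map_smul, hD, smul_eq_mul]
    rw [sum_add_distrib,
      sum_range_mul_rev_eq_single hj hD_zero fun m => derivWithin (aExt a m) I x,
      sum_range_mul_rev_succ_eq hj hD_zero (A := fun m => aExt a m x)
        (congrFun (aExt_eq_zero a n.lt_succ_self) x)]
  have hD_top : genW I f (dIdx n 1 j) x = D (n + 1) := by
    show _ = genW I f (Function.update (dIdx n 1 j) q₀ (dIdx n 1 j q₀)) x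
    rw [Function.update_eq_self]
  have hD_self : D j = (-1 : ℝ) ^ (n - j - 1) * genW I f (wIdx n) x := genW_update_dIdx_self hj
  rw [hD_top, hD_order_succ, hD_order, hD_self]
  ring

/-- for a fundamental system `f` with continuously differentiable `a`,
`W_f^{(n+1,n-1,…,j+1,j-1,…,0)} = (-1)^{n-j-1} W_f (a_1 a_{n-j} + a_{n-j+1} + a_{n-j}')`
on `I` for `0 ≤ j ≤ n-1`, where `a_{n+1} := 0`. -/
theorem stmt_8 (n : ℕ) (hn : 0 < n) (I : Set ℝ) (hIo : IsOpen I) (hIne : I.Nonempty)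
    (hIc : I.OrdConnected) (a f : ℝ → Fin n → ℝ)
    (ha : ∀ i : Fin n, ContDiffOn ℝ 1 (fun t => a t i) I)
    (hf : FundSystem I a f) :
    ∀ j < n, ∀ x ∈ I,
      genW I f (dIdx n 1 j) x =
        (-1 : ℝ) ^ (n - j - 1) * genW I f (wIdx n) x *
          (aExt a 1 x * aExt a (n - j) x + aExt a (n - j + 1) x +
            derivWithin (aExt a (n - j)) I x) :=
  stmt_8_general n I hIo a f ha hf
end
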